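/- Let P be a finite (3+1)-free poset and write X_{G(P)} = ∑_μ c_μ e_μ. Then c_μ = 0 for every partition μ of |P| whose number of parts exceeds h(P). -/

import Mathlib

open Finset

/-- The chromatic symmetric function of a graph, as a formal power series in
variables `x_0, x_1, …`: the coefficient of the monomial `x^d` is the number of
proper colorings `κ : V → ℕ` in which color `i` is used `d i` times. -/
noncomputable def chromSym {V : Type} [Fintype V] (G : SimpleGraph V) :
    MvPowerSeries ℕ ℤ :=
  fun d => (Nat.card {κ : V → ℕ //
    (∀ u v : V, G.Adj u v → κ u ≠ κ v) ∧
    ∀ i : ℕ, Nat.card {v : V // κ v = i} = d i} : ℤ)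

open Classical in
/-- The elementary symmetric function `e_k = ∑_{i₁<⋯<i_k} x_{i₁}⋯x_{i_k}`:
the coefficient of `x^d` is `1` iff `d` is squarefree of total degree `k`. -/
noncomputable def elemSym (k : ℕ) : MvPowerSeries ℕ ℤ :=
  fun d => if (∀ i, d i ≤ 1) ∧ (∑ i ∈ d.support, d i) = k then 1 else 0

/-- The elementary symmetric function `e_μ = ∏ e_{μ_i}` indexed by a partition `μ`. -/
noncomputable def elemSymPart {n : ℕ} (μ : n.Partition) : MvPowerSeries ℕ ℤ :=
  (μ.parts.map elemSym).prod

/-- The incomparability graph of a poset: an edge joins each incomparable pair. -/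
def incompGraph (P : Type*) [PartialOrder P] : SimpleGraph P where
  Adj u v := ¬ u ≤ v ∧ ¬ v ≤ u
  symm := ⟨fun u v h => ⟨h.2, h.1⟩⟩
  loopless := ⟨fun u h => h.1 le_rfl⟩

open Classical in
/-- The height of a finite poset: the maximum size of a chain. -/
noncomputable def posetHeight (P : Type*) [PartialOrder P] [Fintype P] : ℕ :=
  Finset.univ.sup fun c : Finset P => if IsChain (· ≤ ·) (↑c : Set P) then c.card else 0

/-- `P` is `(3+1)`-free: no induced subposet is the disjoint union of a
`3`-element chain and a `1`-element chain. -/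
def ThreePlusOneFree (P : Type*) [PartialOrder P] : Prop :=
  ¬ ∃ a b c d : P, a < b ∧ b < c ∧
    (¬ d ≤ a ∧ ¬ a ≤ d) ∧ (¬ d ≤ b ∧ ¬ b ≤ d) ∧ (¬ d ≤ c ∧ ¬ c ≤ d)


namespace Stmt18Aux

/-- Indicator finsupp of `{0, …, a-1}`. -/
noncomputable def chiF (a : ℕ) : ℕ →₀ ℕ :=
  Finsupp.indicator (Finset.range a) (fun _ _ => 1)

lemma chiF_apply (a i : ℕ) : chiF a i = if i < a then 1 else 0 := by
  classical
  simp [chiF, Finsupp.indicator_apply]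

/-- The conjugate of a multiset of parts, as a finsupp. -/
noncomputable def conjF (m : Multiset ℕ) : ℕ →₀ ℕ := (m.map chiF).sum

@[simp] lemma conjF_zero : conjF 0 = 0 := by simp [conjF]

@[simp] lemma conjF_cons (a : ℕ) (m : Multiset ℕ) :
    conjF (a ::ₘ m) = chiF a + conjF m := by
  simp [conjF]

lemma conjF_apply (m : Multiset ℕ) (i : ℕ) :
    conjF m i = Multiset.card (m.filter (fun b => i < b)) := by
  induction m using Multiset.induction_on with
  | empty => simp
  | cons a m ih =>
    rw [conjF_cons]
    simp only [Finsupp.add_apply, ih, chiF_apply]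
    rw [Multiset.filter_cons]
    by_cases h : i < a <;> simp [h] <;> omega

/-- `Sf m k = ∑_{b ∈ m} min b k`. -/
def Sf (m : Multiset ℕ) (k : ℕ) : ℕ := (m.map (fun b => min b k)).sum

@[simp] lemma Sf_zero (k : ℕ) : Sf 0 k = 0 := by simp [Sf]

@[simp] lemma Sf_cons (a : ℕ) (m : Multiset ℕ) (k : ℕ) :
    Sf (a ::ₘ m) k = min a k + Sf m k := by simp [Sf]

lemma sum_range_chiF (a k : ℕ) : ∑ i ∈ Finset.range k, chiF a i = min a k := by
  induction k with
  | zero => simp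
  | succ k ih =>
    rw [Finset.sum_range_succ, ih, chiF_apply]
    split_ifs with h <;> omega

lemma sum_range_conjF (m : Multiset ℕ) (k : ℕ) :
    ∑ i ∈ Finset.range k, conjF m i = Sf m k := by
  induction m using Multiset.induction_on with
  | empty => simp
  | cons a m ih =>
    rw [conjF_cons, Sf_cons, ← ih, ← sum_range_chiF a k, ← Finset.sum_add_distrib]
    simp

lemma Sf_le_sum (m : Multiset ℕ) (k : ℕ) : Sf m k ≤ m.sum := by
  induction m using Multiset.induction_on with
  | empty => simp
  | cons a m ih => rw [Sf_cons, Multiset.sum_cons]; have := min_le_left a k; omega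

lemma Sf_top (m : Multiset ℕ) (k : ℕ) (h : ∀ b ∈ m, b ≤ k) : Sf m k = m.sum := by
  induction m using Multiset.induction_on with
  | empty => simp
  | cons a m ih =>
    rw [Sf_cons, Multiset.sum_cons, ih (fun b hb => h b (Multiset.mem_cons_of_mem hb))]
    have := h a (Multiset.mem_cons_self a m); omega

lemma conjF_step (m : Multiset ℕ) (i : ℕ) :
    conjF m i = conjF m (i + 1) + Multiset.count (i + 1) m := by
  induction m using Multiset.induction_on with
  | empty => simp
  | cons a m ih =>
    simp only [conjF_apply] at ih ⊢
    rw [Multiset.filter_cons, Multiset.filter_cons, Multiset.count_cons]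
    by_cases h3 : i + 1 = a
    · subst h3
      simp only [Nat.lt_irrefl, if_false, if_pos (Nat.lt_succ_self i)]
      simp
      omega
    · have hiff : (i < a) ↔ (i + 1 < a) := by omega
      by_cases h1 : i < a <;> simp [h1, ← hiff, h3] <;> omega

lemma eq_of_conjF_eq (m m' : Multiset ℕ) (hm : 0 ∉ m) (hm' : 0 ∉ m')
    (h : ∀ i, conjF m i = conjF m' i) : m = m' := by
  ext a
  cases a with
  | zero =>
    rw [Multiset.count_eq_zero_of_notMem hm, Multiset.count_eq_zero_of_notMem hm']
  | succ i =>
    have h1 := conjF_step m i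
    have h2 := conjF_step m' i
    have h3 := h i
    have h4 := h (i + 1)
    omega

noncomputable def E (m : Multiset ℕ) (d : ℕ →₀ ℕ) : ℤ :=
  MvPowerSeries.coeff d ((m.map elemSym).prod)

open Classical in
lemma coeff_elemSym (k : ℕ) (d : ℕ →₀ ℕ) :
    MvPowerSeries.coeff d (elemSym k) =
      if (∀ i, d i ≤ 1) ∧ (∑ i ∈ d.support, d i) = k then 1 else 0 := by
  rw [MvPowerSeries.coeff_apply]
  rfl

lemma E_zero (d : ℕ →₀ ℕ) : E 0 d = if d = 0 then 1 else 0 := by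
  classical
  simp only [E, Multiset.map_zero, Multiset.prod_zero]
  rw [MvPowerSeries.coeff_one]

lemma E_cons (a : ℕ) (m : Multiset ℕ) (d : ℕ →₀ ℕ) :
    E (a ::ₘ m) d =
      ∑ p ∈ Finset.HasAntidiagonal.antidiagonal d,
        MvPowerSeries.coeff p.1 (elemSym a) * E m p.2 := by
  classical
  simp only [E, Multiset.map_cons, Multiset.prod_cons]
  rw [MvPowerSeries.coeff_mul]

lemma sum_range_le_support (d : ℕ →₀ ℕ) (k : ℕ) :
    ∑ i ∈ Finset.range k, d i ≤ ∑ i ∈ d.support, d i := by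
  classical
  have h1 : ∑ i ∈ Finset.range k ∩ d.support, d i = ∑ i ∈ Finset.range k, d i :=
    Finset.sum_subset Finset.inter_subset_left
      (fun x _ hx => by
        by_contra hne
        exact hx (Finset.mem_inter.2 ⟨by assumption, Finsupp.mem_support_iff.2 hne⟩))
  rw [← h1]
  exact Finset.sum_le_sum_of_subset Finset.inter_subset_right

lemma E_eq_zero (m : Multiset ℕ) (d : ℕ →₀ ℕ) (k : ℕ)
    (h : Sf m k < ∑ i ∈ Finset.range k, d i) : E m d = 0 := by
  classical
  induction m using Multiset.induction_on generalizing d with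
  | empty =>
    rw [E_zero, if_neg]
    intro hd0
    rw [Sf_zero] at h
    simp [hd0] at h
  | cons a m ih =>
    rw [E_cons]
    apply Finset.sum_eq_zero
    intro p hp
    rw [Finset.HasAntidiagonal.mem_antidiagonal] at hp
    rw [coeff_elemSym]
    split_ifs with hsq
    · obtain ⟨h1, h2⟩ := hsq
      have hp1a : ∑ i ∈ Finset.range k, p.1 i ≤ a :=
        h2 ▸ sum_range_le_support p.1 k
      have hp1k : ∑ i ∈ Finset.range k, p.1 i ≤ k := by
        calc ∑ i ∈ Finset.range k, p.1 i ≤ ∑ i ∈ Finset.range k, 1 :=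
              Finset.sum_le_sum (fun i _ => h1 i)
        _ = k := by simp
      have hsplit : ∑ i ∈ Finset.range k, d i =
          ∑ i ∈ Finset.range k, p.1 i + ∑ i ∈ Finset.range k, p.2 i := by
        rw [← Finset.sum_add_distrib]
        apply Finset.sum_congr rfl
        intro i _
        rw [← hp]
        rfl
      have hm : Sf m k < ∑ i ∈ Finset.range k, p.2 i := by
        rw [Sf_cons] at h
        have := min_le_left a k
        have := min_le_right a k
        omega
      rw [ih p.2 hm, mul_zero]
    · rw [zero_mul]

lemma support_subset_range_chiF (a : ℕ) : (chiF a).support ⊆ Finset.range a := by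
  intro i hi
  rw [Finsupp.mem_support_iff, chiF_apply] at hi
  rw [Finset.mem_range]
  by_contra h
  simp [h] at hi

lemma sum_support_chiF (a : ℕ) : ∑ i ∈ (chiF a).support, chiF a i = a := by
  have h : ∑ i ∈ (chiF a).support, chiF a i = ∑ i ∈ Finset.range a, chiF a i :=
    Finset.sum_subset (support_subset_range_chiF a)
      (fun x _ hx => Finsupp.notMem_support_iff.1 hx)
  rw [h, sum_range_chiF, min_self]

lemma coeff_elemSym_chiF (a : ℕ) : MvPowerSeries.coeff (chiF a) (elemSym a) = 1 := by
  rw [coeff_elemSym, if_pos]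
  constructor
  · intro i; rw [chiF_apply]; split_ifs <;> omega
  · exact sum_support_chiF a

lemma E_conjF (m : Multiset ℕ) : E m (conjF m) = 1 := by
  classical
  induction m using Multiset.induction_on with
  | empty => rw [conjF_zero, E_zero, if_pos rfl]
  | cons a m ih =>
    rw [conjF_cons, E_cons]
    rw [Finset.sum_eq_single (chiF a, conjF m)]
    · rw [coeff_elemSym_chiF, ih, one_mul]
    · intro p hp hne
      rw [Finset.HasAntidiagonal.mem_antidiagonal] at hp
      rw [coeff_elemSym]
      split_ifs with hsq
      · obtain ⟨h1, h2⟩ := hsq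
        by_cases hchi : p.1 = chiF a
        · exfalso
          apply hne
          have : p.2 = conjF m := by
            have := hp
            rw [hchi] at this
            exact add_left_cancel this
          exact Prod.ext hchi this
        · -- find i < a with p.1 i = 0
          have hex : ∃ i, i < a ∧ p.1 i = 0 := by
            by_contra hno
            push_neg at hno
            apply hchi
            ext i
            rw [chiF_apply]
            split_ifs with hia
            · have ha1 := h1 i
              have ha2 := hno i hia
              omega
            · by_contra hzi
              have hsub : insert i (Finset.range a) ⊆ p.1.support := by
                intro j hj
                rcases Finset.mem_insert.1 hj with rfl | hj
                · exact Finsupp.mem_support_iff.2 hzi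
                · exact Finsupp.mem_support_iff.2 (hno j (Finset.mem_range.1 hj))
              have hle := Finset.sum_le_sum_of_subset (f := fun j => p.1 j) hsub
              rw [Finset.sum_insert (by rw [Finset.mem_range]; exact hia)] at hle
              beta_reduce at hle
              have hra : a ≤ ∑ j ∈ Finset.range a, p.1 j := by
                calc a = ∑ _j ∈ Finset.range a, 1 := by simp
                _ ≤ _ := Finset.sum_le_sum
                    (fun j hj => by have := hno j (Finset.mem_range.1 hj); omega)
              have hp1i : 1 ≤ p.1 i := by omega
              omega
          obtain ⟨i, hia, hi0⟩ := hex
          have hup : ∑ j ∈ Finset.range (i + 1), p.1 j ≤ i := by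
            rw [Finset.sum_range_succ, hi0, add_zero]
            calc ∑ j ∈ Finset.range i, p.1 j ≤ ∑ _j ∈ Finset.range i, 1 :=
                  Finset.sum_le_sum (fun j _ => h1 j)
            _ = i := by simp
          have hdk : ∑ j ∈ Finset.range (i + 1), (chiF a + conjF m) j =
              (i + 1) + Sf m (i + 1) := by
            have : ∑ j ∈ Finset.range (i + 1), (chiF a + conjF m) j =
                ∑ j ∈ Finset.range (i + 1), chiF a j +
                ∑ j ∈ Finset.range (i + 1), conjF m j := by
              rw [← Finset.sum_add_distrib]; rfl
            rw [this, sum_range_chiF, sum_range_conjF]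
            have : min a (i + 1) = i + 1 := by omega
            rw [this]
          have hsplit : ∑ j ∈ Finset.range (i + 1), (chiF a + conjF m) j =
              ∑ j ∈ Finset.range (i + 1), p.1 j + ∑ j ∈ Finset.range (i + 1), p.2 j := by
            rw [← Finset.sum_add_distrib]
            apply Finset.sum_congr rfl
            intro j _
            rw [← hp]
            rfl
          have hm2 : Sf m (i + 1) < ∑ j ∈ Finset.range (i + 1), p.2 j := by omega
          rw [E_eq_zero m p.2 (i + 1) hm2, mul_zero]
      · rw [zero_mul]
    · intro habs
      exfalso
      apply habs
      rw [Finset.HasAntidiagonal.mem_antidiagonal]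


open Classical in
lemma chromSym_coeff_eq_zero (P : Type) [PartialOrder P] [Fintype P] (d : ℕ →₀ ℕ)
    (hd : posetHeight P < d 0) :
    MvPowerSeries.coeff d (chromSym (incompGraph P)) = 0 := by
  rw [MvPowerSeries.coeff_apply]
  have hempty : IsEmpty {κ : P → ℕ //
      (∀ u v : P, (incompGraph P).Adj u v → κ u ≠ κ v) ∧
      ∀ i : ℕ, Nat.card {v : P // κ v = i} = d i} := by
    constructor
    rintro ⟨κ, hprop, hcard⟩
    set s : Finset P := Finset.univ.filter (fun v => κ v = 0) with hs
    have hchain : IsChain (· ≤ ·) (↑s : Set P) := by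
      intro u hu v hv hne
      by_contra hcomp
      push_neg at hcomp
      have hu' : κ u = 0 := (Finset.mem_filter.1 (Finset.mem_coe.1 hu)).2
      have hv' : κ v = 0 := (Finset.mem_filter.1 (Finset.mem_coe.1 hv)).2
      exact hprop u v ⟨hcomp.1, hcomp.2⟩ (by rw [hu', hv'])
    have hcard0 : s.card = d 0 := by
      rw [← hcard 0, Nat.card_eq_fintype_card, Fintype.card_subtype]
    have hle : s.card ≤ posetHeight P := by
      rw [posetHeight]
      have h := Finset.le_sup (b := s)
        (f := fun c : Finset P => if IsChain (· ≤ ·) (↑c : Set P) then c.card else 0)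
        (Finset.mem_univ s)
      beta_reduce at h
      rwa [if_pos hchain] at h
    omega
  show ((Nat.card _ : ℕ) : ℤ) = 0
  rw [Nat.card_of_isEmpty]
  rfl

end Stmt18Aux

open Stmt18Aux in
/-- For a `(3+1)`-free poset `P`, in the expansion `X_{G(P)} = ∑_μ c_μ e_μ` the
coefficient `c_μ` vanishes whenever `μ` has more parts than the height of `P`. -/
theorem stmt_18 (P : Type) [PartialOrder P] [Fintype P]
    (hP : ThreePlusOneFree P)
    (c : (Fintype.card P).Partition → ℤ)
    (hc : chromSym (incompGraph P) =
      ∑ μ : (Fintype.card P).Partition,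
        (c μ : MvPowerSeries ℕ ℤ) * elemSymPart μ) :
    ∀ μ : (Fintype.card P).Partition,
      posetHeight P < Multiset.card μ.parts → c μ = 0 := by
  classical
  set B := (Fintype.card P + 1) * Fintype.card P with hB
  set M : (Fintype.card P).Partition → ℕ :=
    fun μ => ∑ k ∈ Finset.range (Fintype.card P + 1), Sf μ.parts k with hM
  have hparts_le : ∀ (μ : (Fintype.card P).Partition), ∀ b ∈ μ.parts, b ≤ Fintype.card P := by
    intro μ b hb
    exact μ.parts_sum ▸ Multiset.le_sum_of_mem hb
  have hSf_le : ∀ (μ : (Fintype.card P).Partition) (k : ℕ), Sf μ.parts k ≤ Fintype.card P := by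
    intro μ k
    calc Sf μ.parts k ≤ μ.parts.sum := Sf_le_sum _ _
    _ = Fintype.card P := μ.parts_sum
  have hMle : ∀ μ : (Fintype.card P).Partition, M μ ≤ B := by
    intro μ
    calc M μ ≤ ∑ _k ∈ Finset.range (Fintype.card P + 1), Fintype.card P :=
          Finset.sum_le_sum (fun k _ => hSf_le μ k)
    _ = B := by simp [hB]
  have key : ∀ (t : ℕ) (μ : (Fintype.card P).Partition), B - M μ ≤ t →
      posetHeight P < Multiset.card μ.parts → c μ = 0 := by
    intro t
    induction t using Nat.strong_induction_on with
    | _ t IH =>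
      intro μ ht hμ
      set d := conjF μ.parts with hd
      have hd0 : d 0 = Multiset.card μ.parts := by
        rw [hd, conjF_apply]
        congr 1
        rw [Multiset.filter_eq_self]
        exact fun b hb => μ.parts_pos hb
      have hEq := congrArg (MvPowerSeries.coeff d) hc
      rw [chromSym_coeff_eq_zero P d (by rw [hd0]; exact hμ), map_sum] at hEq
      have hterm : ∀ ν : (Fintype.card P).Partition,
          MvPowerSeries.coeff d ((c ν : MvPowerSeries ℕ ℤ) * elemSymPart ν) =
            c ν * E ν.parts d := by
        intro ν
        rw [← zsmul_eq_mul, map_zsmul, smul_eq_mul]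
        rfl
      rw [Finset.sum_congr rfl (fun ν _ => hterm ν)] at hEq
      have hoff : ∀ ν : (Fintype.card P).Partition, ν ≠ μ → c ν * E ν.parts d = 0 := by
        intro ν hne
        by_cases hE : E ν.parts d = 0
        · rw [hE, mul_zero]
        · have hle : ∀ k, Sf μ.parts k ≤ Sf ν.parts k := by
            intro k
            by_contra hlt
            push_neg at hlt
            exact hE (E_eq_zero _ _ k (by rwa [hd, sum_range_conjF]))
          have hcount : Multiset.card μ.parts ≤ Multiset.card ν.parts := by
            have h1 := hle 1
            have e1 : ∀ (ρ : (Fintype.card P).Partition),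
                Sf ρ.parts 1 = Multiset.card ρ.parts := by
              intro ρ
              rw [← sum_range_conjF, Finset.sum_range_one, conjF_apply]
              congr 1
              rw [Multiset.filter_eq_self]
              exact fun b hb => ρ.parts_pos hb
            rw [e1, e1] at h1
            exact h1
          have hMlt : M μ < M ν := by
            rw [hM]
            apply Finset.sum_lt_sum (fun k _ => hle k)
            by_contra hno
            push_neg at hno
            apply hne
            have hSeq : ∀ k, Sf μ.parts k = Sf ν.parts k := by
              intro k
              by_cases hk : k ≤ Fintype.card P
              · exact le_antisymm (hle k)
                  (hno k (Finset.mem_range.2 (by omega)))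
              · rw [Sf_top _ _ (fun b hb => by have := hparts_le μ b hb; omega),
                    Sf_top _ _ (fun b hb => by have := hparts_le ν b hb; omega),
                    μ.parts_sum, ν.parts_sum]
            have hconj : ∀ i, conjF ν.parts i = conjF μ.parts i := by
              intro i
              have g1 := sum_range_conjF μ.parts (i + 1)
              have g2 := sum_range_conjF μ.parts i
              have g3 := sum_range_conjF ν.parts (i + 1)
              have g4 := sum_range_conjF ν.parts i
              rw [Finset.sum_range_succ] at g1 g3
              have e1 := hSeq i
              have e2 := hSeq (i + 1)
              omega
            have hpp : ν.parts = μ.parts :=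
              eq_of_conjF_eq _ _
                (fun h0 => lt_irrefl 0 (ν.parts_pos h0))
                (fun h0 => lt_irrefl 0 (μ.parts_pos h0)) hconj
            exact Nat.Partition.ext hpp
          have hνh : posetHeight P < Multiset.card ν.parts := lt_of_lt_of_le hμ hcount
          have hmeas : B - M ν < t := by
            have := hMle ν
            have := hMle μ
            omega
          rw [IH (B - M ν) hmeas ν le_rfl hνh, zero_mul]
      have hsum : ∑ ν : (Fintype.card P).Partition, c ν * E ν.parts d = c μ * E μ.parts d :=
        Finset.sum_eq_single μ (fun ν _ hne => hoff ν hne)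
          (fun h => absurd (Finset.mem_univ μ) h)
      rw [hsum, hd, E_conjF, mul_one] at hEq
      exact hEq.symm
  intro μ hμ
  exact key B μ (by omega) hμ
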